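/- If {P^{(n)}_{σ^{-n}ω} 1_X}_n is uniformly integrable (equivalently weakly precompact) for ℙ-a.e. ω, then for ℙ-a.e. ω and every f ∈ L¹(X,m) the family {P^{(n)}_{σ^{-n}ω} f}_n is uniformly integrable. -/

import Mathlib

/-!
Fix a Markov operator `T` and a level `c`, and split `|f| = (|f| ⊓ c) + (|f| - |f| ⊓ c)`. Positivity
gives `|T f| ≤ T |f|`; on a set `A` the bounded part contributes at most `c ∫_A T 1`, and since `T`
preserves integrals of nonnegative functions the remainder contributes at most `∫ (|f| - min |f| c)`,
which is small for large `c` independently of `T`. So uniform smallness of `∫_A T_n 1` over small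
sets `A` passes to `∫_A |T_n f|`. The cocycle operators along the backward orbit of `ω` are
compositions of the `P (σ⁻ᵏ ω)`, which are all Markov for a.e. `ω` because `σ⁻¹` preserves `ℙ`.
-/

open MeasureTheory

/-- `P_ω^{(n)} = P_{σ^{n-1}ω} ∘ ⋯ ∘ P_ω`, `P_ω^{(0)} = id`. -/
noncomputable def clmCocycle {Ω 𝔛 : Type*} [NormedAddCommGroup 𝔛] [NormedSpace ℝ 𝔛]
    (σ : Ω → Ω) (P : Ω → (𝔛 →L[ℝ] 𝔛)) : ℕ → Ω → (𝔛 →L[ℝ] 𝔛)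
  | 0, _ => ContinuousLinearMap.id ℝ 𝔛
  | n + 1, ω => (clmCocycle σ P n (σ ω)).comp (P ω)

/-- The constant function `1` as an element of `L¹(X,m)`. -/
noncomputable def oneLp {X : Type*} [MeasurableSpace X] (m : Measure X)
    [IsProbabilityMeasure m] : Lp ℝ 1 m :=
  indicatorConstLp 1 MeasurableSet.univ (by simp) (1 : ℝ)

open Filter Topology

section Markov

variable {X : Type*} [MeasurableSpace X] {m : Measure X}

theorem coeFn_oneLp [IsProbabilityMeasure m] : ⇑(oneLp m) =ᵐ[m] 1 := by
  filter_upwards [indicatorConstLp_coeFn (p := 1) (μ := m) (hs := MeasurableSet.univ)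
    (hμs := by simp) (c := (1 : ℝ))] with x hx
  rwa [Set.indicator_univ] at hx

theorem tendsto_integral_sub_min_atTop {g : X → ℝ} (hg : Integrable g m) :
    Tendsto (fun c : ℝ => ∫ x, (g x - min (g x) c) ∂m) atTop (𝓝 0) := by
  have hlim : ∀ x, Tendsto (fun c : ℝ => g x - min (g x) c) atTop (𝓝 0) := fun x =>
    tendsto_const_nhds.congr' <| (eventually_ge_atTop (g x)).mono fun c hc => by
      simp only [min_eq_left hc, sub_self]
  have hbound : ∀ c, 0 ≤ c → ∀ x, ‖g x - min (g x) c‖ ≤ |g x| := fun c hc x => by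
    rw [Real.norm_eq_abs, abs_of_nonneg (sub_nonneg.2 (min_le_left _ _))]
    rcases le_total (g x) c with h | h
    · simp [min_eq_left h]
    · rw [min_eq_right h, abs_of_nonneg (hc.trans h)]
      linarith
  simpa using tendsto_integral_filter_of_dominated_convergence (fun x => |g x|)
    (Eventually.of_forall fun c => hg.aestronglyMeasurable.sub
      (hg.aestronglyMeasurable.inf aestronglyMeasurable_const))
    ((eventually_ge_atTop 0).mono fun c hc => Eventually.of_forall (hbound c hc))
    hg.abs (Eventually.of_forall hlim)

def IsMarkovCLM (m : Measure X) (T : Lp ℝ 1 m →L[ℝ] Lp ℝ 1 m) : Prop :=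
  (∀ g : Lp ℝ 1 m, 0 ≤ᵐ[m] ⇑g → 0 ≤ᵐ[m] ⇑(T g)) ∧
  (∀ g : Lp ℝ 1 m, ∫ x, (T g) x ∂m = ∫ x, g x ∂m)

theorem IsMarkovCLM.id : IsMarkovCLM m (ContinuousLinearMap.id ℝ (Lp ℝ 1 m)) :=
  ⟨fun _ hg => hg, fun _ => rfl⟩

theorem IsMarkovCLM.comp {T S : Lp ℝ 1 m →L[ℝ] Lp ℝ 1 m}
    (hT : IsMarkovCLM m T) (hS : IsMarkovCLM m S) : IsMarkovCLM m (T.comp S) :=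
  ⟨fun g hg => hT.1 (S g) (hS.1 g hg), fun g => (hT.2 (S g)).trans (hS.2 g)⟩

variable {T : Lp ℝ 1 m →L[ℝ] Lp ℝ 1 m}

theorem IsMarkovCLM.monotone (hT : IsMarkovCLM m T) : Monotone T := fun g h hgh => by
  have hpos := hT.1 (h - g) ((Lp.coeFn_nonneg _).2 (sub_nonneg.2 hgh))
  rw [map_sub, Lp.coeFn_nonneg] at hpos
  exact sub_nonneg.1 hpos

theorem IsMarkovCLM.abs_le (hT : IsMarkovCLM m T) (f : Lp ℝ 1 m) : |T f| ≤ T |f| :=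
  abs_le'.2 ⟨hT.monotone (le_abs_self f), by simpa using hT.monotone (neg_le_abs f)⟩

theorem IsMarkovCLM.setIntegral_abs_le (hT : IsMarkovCLM m T) (f : Lp ℝ 1 m) (A : Set X) :
    ∫ x in A, |T f x| ∂m ≤ ∫ x in A, T |f| x ∂m := by
  refine integral_mono_ae (L1.integrable_coeFn (T f)).abs.restrict
    (L1.integrable_coeFn _).restrict (ae_restrict_of_ae ?_)
  filter_upwards [Lp.coeFn_abs (T f), (Lp.coeFn_le _ _).2 (hT.abs_le f)] with x hx hle
  rwa [hx] at hle

theorem IsMarkovCLM.setIntegral_le_integral (hT : IsMarkovCLM m T) {g : Lp ℝ 1 m}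
    (hg : 0 ≤ᵐ[m] ⇑g) (A : Set X) : ∫ x in A, T g x ∂m ≤ ∫ x, g x ∂m :=
  hT.2 g ▸ MeasureTheory.setIntegral_le_integral (L1.integrable_coeFn _) (hT.1 g hg)

theorem IsMarkovCLM.setIntegral_le_of_le_smul (hT : IsMarkovCLM m T) {g u : Lp ℝ 1 m} {c : ℝ}
    (hgu : g ≤ c • u) (A : Set X) : ∫ x in A, T g x ∂m ≤ c * ∫ x in A, T u x ∂m := by
  rw [← integral_const_mul]
  refine integral_mono_ae (L1.integrable_coeFn _).restrict
    ((L1.integrable_coeFn _).restrict.const_mul c) (ae_restrict_of_ae ?_)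
  have hle := (Lp.coeFn_le _ _).2 (hT.monotone hgu)
  rw [map_smul] at hle
  filter_upwards [hle, Lp.coeFn_smul c (T u)] with x hx hsmul
  rwa [hsmul] at hx

theorem IsMarkovCLM.setIntegral_abs_le_add [IsProbabilityMeasure m] (hT : IsMarkovCLM m T)
    (f : Lp ℝ 1 m) (c : ℝ) (A : Set X) :
    ∫ x in A, |T f x| ∂m ≤ c * ∫ x in A, T (oneLp m) x ∂m + ∫ x, (|f x| - min |f x| c) ∂m := by
  set g := |f| ⊓ c • oneLp m
  have hsplit : ∫ x in A, T |f| x ∂m = ∫ x in A, T g x ∂m + ∫ x in A, T (|f| - g) x ∂m := by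
    rw [← integral_add (L1.integrable_coeFn _).restrict (L1.integrable_coeFn _).restrict]
    refine integral_congr_ae (ae_restrict_of_ae ?_)
    rw [show T |f| = T g + T (|f| - g) by rw [← map_add, add_sub_cancel]]
    exact Lp.coeFn_add _ _
  have htail : ∫ x, (|f| - g) x ∂m = ∫ x, (|f x| - min |f x| c) ∂m := by
    refine integral_congr_ae ?_
    filter_upwards [Lp.coeFn_sub |f| g, Lp.coeFn_inf |f| (c • oneLp m), Lp.coeFn_abs f,
      Lp.coeFn_smul c (oneLp m), coeFn_oneLp] with x hsub hinf habs hsmul hone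
    rw [hsub, Pi.sub_apply, hinf, Pi.inf_apply, habs, hsmul, Pi.smul_apply, hone]
    simp
  calc ∫ x in A, |T f x| ∂m ≤ ∫ x in A, T |f| x ∂m := hT.setIntegral_abs_le f A
    _ ≤ c * ∫ x in A, T (oneLp m) x ∂m + ∫ x, (|f| - g) x ∂m := by
      rw [hsplit]
      exact add_le_add (hT.setIntegral_le_of_le_smul inf_le_right A)
        (hT.setIntegral_le_integral ((Lp.coeFn_nonneg _).2 (sub_nonneg.2 inf_le_left)) A)
    _ = _ := by rw [htail]

def UnifAbsContIntegrals {ι : Type*} (m : Measure X) (g : ι → X → ℝ) :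
    Prop :=
  ∀ ε > (0 : ℝ), ∃ δ > (0 : ℝ),
    ∀ A : Set X, MeasurableSet A → m A < ENNReal.ofReal δ → ∀ i, ∫ x in A, g i x ∂m < ε

theorem unifAbsContIntegrals_abs_of_isMarkovCLM {ι : Type*} [IsProbabilityMeasure m]
    {T : ι → Lp ℝ 1 m →L[ℝ] Lp ℝ 1 m} (hT : ∀ i, IsMarkovCLM m (T i))
    (hone : UnifAbsContIntegrals m fun i => ⇑(T i (oneLp m))) (f : Lp ℝ 1 m) :
    UnifAbsContIntegrals m fun i x => |T i f x| := by
  intro ε hε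
  obtain ⟨c, hc, htail⟩ := ((eventually_gt_atTop 0).and
    ((tendsto_integral_sub_min_atTop (L1.integrable_coeFn f).abs).eventually
      (gt_mem_nhds (half_pos hε)))).exists
  obtain ⟨δ, hδ, hsmall⟩ := hone (ε / (2 * c)) (by positivity)
  refine ⟨δ, hδ, fun A hA hmA i => ?_⟩
  calc ∫ x in A, |T i f x| ∂m
      ≤ c * ∫ x in A, T i (oneLp m) x ∂m + ∫ x, (|f x| - min |f x| c) ∂m :=
        (hT i).setIntegral_abs_le_add f c A
    _ < c * (ε / (2 * c)) + ε / 2 := by gcongr; exact hsmall A hA hmA i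
    _ = ε := by field_simp; ring

end Markov

section Cocycle

variable {Ω X : Type*} [MeasurableSpace X] {m : Measure X} {P : Ω → (Lp ℝ 1 m →L[ℝ] Lp ℝ 1 m)}

theorem isMarkovCLM_clmCocycle {σ : Ω → Ω} {n : ℕ} {ω : Ω}
    (hP : ∀ k < n, IsMarkovCLM m (P (σ^[k] ω))) : IsMarkovCLM m (clmCocycle σ P n ω) := by
  induction n generalizing ω with
  | zero => exact IsMarkovCLM.id
  | succ n ih =>
    refine IsMarkovCLM.comp (ih fun k hk => ?_) (hP 0 n.succ_pos)
    rw [← Function.iterate_succ_apply]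
    exact hP (k + 1) (by omega)

theorem isMarkovCLM_clmCocycle_iterate_of_rightInverse {σ τ : Ω → Ω}
    (hστ : Function.RightInverse τ σ) {ω : Ω} (hP : ∀ k, IsMarkovCLM m (P (τ^[k] ω))) (n : ℕ) :
    IsMarkovCLM m (clmCocycle σ P n (τ^[n] ω)) :=
  isMarkovCLM_clmCocycle fun k hk => by
    rw [← Nat.add_sub_cancel' hk.le, Function.iterate_add_apply, hστ.iterate k]
    exact hP _

end Cocycle

theorem uniform_integrability_extends_to_L1_general
    {Ω : Type*} [MeasurableSpace Ω] (ℙ : Measure Ω)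
    {X : Type*} [MeasurableSpace X] (m : Measure X) [IsProbabilityMeasure m]
    (σ : Ω ≃ᵐ Ω) (hσ : Ergodic σ ℙ)
    (P : Ω → (Lp ℝ 1 m →L[ℝ] Lp ℝ 1 m))
    (hMarkov : ∀ᵐ ω ∂ℙ,
      (∀ g : Lp ℝ 1 m, 0 ≤ᵐ[m] ⇑g → 0 ≤ᵐ[m] ⇑(P ω g)) ∧
      (∀ g : Lp ℝ 1 m, ∫ x, (P ω g) x ∂m = ∫ x, g x ∂m))
    (hone : ∀ᵐ ω ∂ℙ, ∀ ε > (0 : ℝ), ∃ δ > (0 : ℝ),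
      ∀ A : Set X, MeasurableSet A → m A < ENNReal.ofReal δ → ∀ n : ℕ,
        ∫ x in A, (clmCocycle σ P n (σ.symm^[n] ω) (oneLp m)) x ∂m < ε) :
    ∀ᵐ ω ∂ℙ, ∀ f : Lp ℝ 1 m, ∀ ε > (0 : ℝ), ∃ δ > (0 : ℝ),
      ∀ A : Set X, MeasurableSet A → m A < ENNReal.ofReal δ → ∀ n : ℕ,
        ∫ x in A, |(clmCocycle σ P n (σ.symm^[n] ω) f) x| ∂m < ε := by
  have hσ_symm : MeasurePreserving σ.symm ℙ ℙ := hσ.toMeasurePreserving.symm σ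
  have hMarkov_orbit : ∀ᵐ ω ∂ℙ, ∀ k : ℕ, IsMarkovCLM m (P (σ.symm^[k] ω)) :=
    ae_all_iff.2 fun k => (hσ_symm.iterate k).quasiMeasurePreserving.ae hMarkov
  filter_upwards [hMarkov_orbit, hone] with ω hω hone_ω
  exact unifAbsContIntegrals_abs_of_isMarkovCLM
    (isMarkovCLM_clmCocycle_iterate_of_rightInverse σ.apply_symm_apply hω) hone_ω

/-- If `{P^{(n)}_{σ^{-n}ω} 1_X}_n` is uniformly integrable for ℙ-a.e. `ω`,
then for ℙ-a.e. `ω` and every `f ∈ L¹(X,m)` the family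
`{P^{(n)}_{σ^{-n}ω} f}_n` is uniformly integrable. -/
theorem uniform_integrability_extends_to_L1
    {Ω : Type*} [MeasurableSpace Ω] (ℙ : Measure Ω) [IsProbabilityMeasure ℙ]
    {X : Type*} [MeasurableSpace X] (m : Measure X) [IsProbabilityMeasure m]
    (σ : Ω ≃ᵐ Ω) (hσ : Ergodic σ ℙ)
    (P : Ω → (Lp ℝ 1 m →L[ℝ] Lp ℝ 1 m))
    (hMarkov : ∀ᵐ ω ∂ℙ,
      (∀ g : Lp ℝ 1 m, 0 ≤ᵐ[m] ⇑g → 0 ≤ᵐ[m] ⇑(P ω g)) ∧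
      (∀ g : Lp ℝ 1 m, ∫ x, (P ω g) x ∂m = ∫ x, g x ∂m))
    (hone : ∀ᵐ ω ∂ℙ, ∀ ε > (0 : ℝ), ∃ δ > (0 : ℝ),
      ∀ A : Set X, MeasurableSet A → m A < ENNReal.ofReal δ → ∀ n : ℕ,
        ∫ x in A, (clmCocycle σ P n (σ.symm^[n] ω) (oneLp m)) x ∂m < ε) :
    ∀ᵐ ω ∂ℙ, ∀ f : Lp ℝ 1 m, ∀ ε > (0 : ℝ), ∃ δ > (0 : ℝ),
      ∀ A : Set X, MeasurableSet A → m A < ENNReal.ofReal δ → ∀ n : ℕ,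
        ∫ x in A, |(clmCocycle σ P n (σ.symm^[n] ω) f) x| ∂m < ε :=
  uniform_integrability_extends_to_L1_general ℙ m σ hσ P hMarkov hone
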